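/- For J = diag(J₁,J₂,J₃) with pairwise distinct entries and L ∈ ℝ³ with L₁L₂L₃ ≠ 0, define V⁰ = L, V¹ = Λ_{J,L}·L, V² = Λ_{J,L}·V¹ where Λ_{J,L} = D_J·L̂. Then there exists a choice of J and L for which V⁰, V¹, V² are linearly independent in ℝ³. -/

import Mathlib

open Matrix

def rigidBodyMatrix (J L : Fin 3 → ℝ) : Matrix (Fin 3) (Fin 3) ℝ :=
  diagonal ![J 2 - J 1, J 0 - J 2, J 1 - J 0] * of ![![0, L 2, L 1], ![L 2, 0, L 0], ![L 1, L 0, 0]]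

lemma rigidBodyMatrix_mulVec (J L v : Fin 3 → ℝ) :
    rigidBodyMatrix J L *ᵥ v =
      ![(J 2 - J 1) * (L 2 * v 1 + L 1 * v 2), (J 0 - J 2) * (L 2 * v 0 + L 0 * v 2),
        (J 1 - J 0) * (L 1 * v 0 + L 0 * v 1)] := by
  ext i
  fin_cases i <;>
    simp [rigidBodyMatrix, mulVec, dotProduct, Fin.sum_univ_three] <;> ring

/-- There exist `J = diag(J₁,J₂,J₃)` with pairwise distinct entries and `L` with
`L₁L₂L₃ ≠ 0` such that `V⁰ = L`, `V¹ = Λ L`, `V² = Λ² L` are linearly independent,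
where `Λ = D_J · L̂`. -/
theorem stmt_15 :
    ∃ (J L : Fin 3 → ℝ),
      (J 0 ≠ J 1 ∧ J 1 ≠ J 2 ∧ J 0 ≠ J 2) ∧ L 0 * L 1 * L 2 ≠ 0 ∧
      (let Λ : Matrix (Fin 3) (Fin 3) ℝ :=
        (Matrix.diagonal ![J 2 - J 1, J 0 - J 2, J 1 - J 0]) *
          Matrix.of ![![0, L 2, L 1], ![L 2, 0, L 0], ![L 1, L 0, 0]]
       LinearIndependent ℝ ![L, Λ.mulVec L, Λ.mulVec (Λ.mulVec L)]) := by
  refine ⟨![0, 1, 3], ![1, 1, 1], by simp, by simp, ?_⟩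
  show LinearIndependent ℝ
    ![_, rigidBodyMatrix _ _ *ᵥ _, rigidBodyMatrix _ _ *ᵥ (rigidBodyMatrix _ _ *ᵥ _)]
  have hV₁ : rigidBodyMatrix ![0, 1, 3] ![1, 1, 1] *ᵥ ![1, 1, 1] = ![4, -6, 2] := by
    rw [rigidBodyMatrix_mulVec]; norm_num [cons_val_two, vecHead, vecTail]
  have hV₂ : rigidBodyMatrix ![0, 1, 3] ![1, 1, 1] *ᵥ ![4, -6, 2] = ![-8, -18, -2] := by
    rw [rigidBodyMatrix_mulVec]; norm_num [cons_val_two, vecHead, vecTail]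
  rw [hV₁, hV₂]
  refine linearIndependent_rows_of_det_ne_zero (A := of ![_, _, _]) ?_
  -- the determinant is -80
  rw [det_fin_three]
  norm_num [cons_val_two, vecHead, vecTail]
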